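/- Let n ≥ 4 and suppose S ∈ ℤ^{n+1} satisfies Q(S,S) = −(n+2), c₁(S) = −n, Q(S, D₂) = 0, Q(S, S₁) = 1, and Q(S, S_i) = 0 for all 2 ≤ i ≤ n−2, where S_i = E_{n−1−i} − E_{n−i} for 1 ≤ i ≤ n−3 and S_{n−2} = H − E₁ − E₂ − E_n. Then S = −2H + 3E₁ − E₂ − ⋯ − E_{n−2}. -/

import Mathlib

open Finset
open Fin.NatCast

/-- The class of the line `H` in `H₂(Xₙ;ℤ) ≅ ℤ^{n+1}` (coordinate `0`). -/
def Hv (n : ℕ) : Fin (n + 1) → ℤ := Pi.single 0 1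

/-- The exceptional class `E_j` in `H₂(Xₙ;ℤ) ≅ ℤ^{n+1}` (coordinate `j`, for `1 ≤ j ≤ n`). -/
def Ev (n : ℕ) (j : ℕ) : Fin (n + 1) → ℤ := Pi.single (j : Fin (n + 1)) 1

/-- The intersection form of `Xₙ = ℂP² # n ℂP²‾`. -/
def Qf (n : ℕ) (x y : Fin (n + 1) → ℤ) : ℤ :=
  x 0 * y 0 - ∑ j ∈ Finset.Icc 1 n, x (j : Fin (n + 1)) * y (j : Fin (n + 1))

/-- Pairing with the first Chern class: `c₁(x₀H + Σ x_j E_j) = 3x₀ + Σ x_j`. -/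
def c₁ (n : ℕ) (x : Fin (n + 1) → ℤ) : ℤ :=
  3 * x 0 + ∑ j ∈ Finset.Icc 1 n, x (j : Fin (n + 1))

/-- The class `D₂ = 3H - 2E₁ - Eₙ`. -/
def D₂ (n : ℕ) : Fin (n + 1) → ℤ := 3 • Hv n - 2 • Ev n 1 - Ev n n

/-- The `(-2)`-sphere classes of the chain:
`S_i = E_{n-1-i} - E_{n-i}` for `1 ≤ i ≤ n-3` and `S_{n-2} = H - E₁ - E₂ - Eₙ`. -/
def Sc (n : ℕ) (i : ℕ) : Fin (n + 1) → ℤ :=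
  if i = n - 2 then Hv n - Ev n 1 - Ev n 2 - Ev n n
  else Ev n (n - 1 - i) - Ev n (n - i)

/-!
Orthogonality to the chain spheres `S₂, …, S_{n-3}` forces the coordinates of `S` along
`E₂, …, E_{n-2}` to share one value `t`, leaving five unknowns. Orthogonality to `S₁`,
`S_{n-2}` and `D₂`, together with `c₁(S) = -n`, is linear and expresses every unknown
through `t`; the self-intersection condition then reads `n (t + 1) ((n - 1) t + n + 1) = 0`,
and for `n ≥ 4` the second factor has no integer root, so `t = -1`.
-/

lemma Fin.natCast_eq_natCast_iff_of_le {n a b : ℕ} (ha : a ≤ n) (hb : b ≤ n) :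
    (a : Fin (n + 1)) = b ↔ a = b := by
  rw [Fin.ext_iff, Fin.val_cast_of_lt (by omega), Fin.val_cast_of_lt (by omega)]

lemma funext_natCast {α : Type*} {n : ℕ} {x y : Fin (n + 1) → α} (h : ∀ m ≤ n, x m = y m) :
    x = y := by
  funext k
  simpa using h k (Nat.lt_succ_iff.mp k.isLt)

lemma Hv_eq_Ev_zero (n : ℕ) : Hv n = Ev n 0 := by
  simp [Hv, Ev]

lemma Ev_natCast_apply {n a m : ℕ} (ha : a ≤ n) (hm : m ≤ n) :
    Ev n a m = if m = a then 1 else 0 := by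
  simp only [Ev, Pi.single_apply, Fin.natCast_eq_natCast_iff_of_le hm ha]

lemma sum_Ev_natCast_apply {n a b m : ℕ} (hb : b ≤ n) (hm : m ≤ n) :
    (∑ j ∈ Icc a b, Ev n j) m = if m ∈ Icc a b then 1 else 0 := by
  rw [Finset.sum_apply,
    sum_congr rfl fun j hj => Ev_natCast_apply ((mem_Icc.mp hj).2.trans hb) hm, sum_ite_eq]

lemma Qf_sub_right (n : ℕ) (x y z : Fin (n + 1) → ℤ) :
    Qf n x (y - z) = Qf n x y - Qf n x z := by
  simp only [Qf, Pi.sub_apply, mul_sub, sum_sub_distrib]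
  ring

lemma Qf_nsmul_right (n c : ℕ) (x y : Fin (n + 1) → ℤ) : Qf n x (c • y) = c * Qf n x y := by
  simp only [Qf, Pi.smul_apply, nsmul_eq_mul, mul_left_comm _ (c : ℤ), ← mul_sum]
  ring

lemma Qf_Hv_right (n : ℕ) (x : Fin (n + 1) → ℤ) : Qf n x (Hv n) = x 0 := by
  have hzero : ∀ j ∈ Icc 1 n, x j * Hv n j = 0 := fun j hj => by
    rw [mem_Icc] at hj
    rw [Hv_eq_Ev_zero, Ev_natCast_apply (Nat.zero_le n) hj.2, if_neg (by omega), mul_zero]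
  rw [Qf, sum_eq_zero hzero]
  simp [Hv]

lemma Qf_Ev_right {n m : ℕ} (hm1 : 1 ≤ m) (hmn : m ≤ n) (x : Fin (n + 1) → ℤ) :
    Qf n x (Ev n m) = -x m := by
  have hsum : ∑ j ∈ Icc 1 n, x j * Ev n m j = ∑ j ∈ Icc 1 n, if j = m then x j else 0 :=
    sum_congr rfl fun j hj => by
      rw [Ev_natCast_apply hmn (mem_Icc.mp hj).2, mul_ite, mul_one, mul_zero]
  have h0 : Ev n m 0 = 0 := by
    simpa [if_neg (by omega : 0 ≠ m)] using Ev_natCast_apply hmn (Nat.zero_le n)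
  rw [Qf, hsum, sum_ite_eq', if_pos (mem_Icc.mpr ⟨hm1, hmn⟩), h0]
  ring

lemma Qf_D₂_right {n : ℕ} (hn : 1 ≤ n) (x : Fin (n + 1) → ℤ) :
    Qf n x (D₂ n) = 3 * x 0 + 2 * x 1 + x n := by
  rw [D₂, Qf_sub_right, Qf_sub_right, Qf_nsmul_right, Qf_nsmul_right, Qf_Hv_right,
    Qf_Ev_right le_rfl hn, Qf_Ev_right hn le_rfl]
  push_cast
  ring

lemma Qf_Sc_right_of_lt {n i : ℕ} (hi : i < n - 2) (x : Fin (n + 1) → ℤ) :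
    Qf n x (Sc n i) = x (n - i : ℕ) - x (n - 1 - i : ℕ) := by
  rw [Sc, if_neg hi.ne, Qf_sub_right, Qf_Ev_right (by omega) (by omega),
    Qf_Ev_right (by omega) (by omega)]
  ring

lemma Qf_Sc_right_last {n : ℕ} (hn : 3 ≤ n) (x : Fin (n + 1) → ℤ) :
    Qf n x (Sc n (n - 2)) = x 0 + x 1 + x (2 : ℕ) + x n := by
  rw [Sc, if_pos rfl, Qf_sub_right, Qf_sub_right, Qf_sub_right, Qf_Hv_right,
    Qf_Ev_right le_rfl (by omega), Qf_Ev_right (by omega) (by omega), Qf_Ev_right (by omega) le_rfl]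
  simp only [Nat.cast_ofNat, Nat.cast_one]
  ring

lemma eq_of_forall_succ_eq {α : Type*} {f : ℕ → α} {a b : ℕ}
    (h : ∀ k, a ≤ k → k < b → f (k + 1) = f k) : ∀ j ∈ Icc a b, f j = f a := by
  intro j hj
  obtain ⟨haj, hjb⟩ := mem_Icc.mp hj
  induction j, haj using Nat.le_induction with
  | base => rfl
  | succ k hak ih => exact (h k hak (by omega)).trans (ih (by simp; omega) (by omega))

lemma sum_Icc_one_split {M : Type*} [AddCommMonoid M] {n : ℕ} (hn : 3 ≤ n) (f : ℕ → M) :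
    ∑ j ∈ Icc 1 n, f j = f 1 + ∑ j ∈ Icc 2 (n - 2), f j + f (n - 1) + f n := by
  have hIcc : Icc 1 n = insert 1 (insert (n - 1) (insert n (Icc 2 (n - 2)))) := by
    ext j; simp only [mem_Icc, mem_insert]; omega
  rw [hIcc, sum_insert (by simp; omega), sum_insert (by simp; omega), sum_insert (by simp; omega)]
  abel

lemma sum_Icc_two_eq_nsmul {M : Type*} [AddCommMonoid M] {n : ℕ} {f : ℕ → M} {t : M}
    (h : ∀ j ∈ Icc 2 (n - 2), f j = t) : ∑ j ∈ Icc 2 (n - 2), f j = (n - 3) • t := by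
  rw [sum_eq_card_nsmul h, Nat.card_Icc]
  congr 1

lemma c₁_eq_of_middle_const {n : ℕ} (hn : 3 ≤ n) {x : Fin (n + 1) → ℤ} {t : ℤ}
    (h : ∀ j ∈ Icc 2 (n - 2), x j = t) :
    c₁ n x = 3 * x 0 + x 1 + (n - 3) * t + x (n - 1 : ℕ) + x n := by
  rw [c₁, sum_Icc_one_split hn, sum_Icc_two_eq_nsmul h, nsmul_eq_mul, Nat.cast_sub hn]
  push_cast
  ring

lemma Qf_self_eq_of_middle_const {n : ℕ} (hn : 3 ≤ n) {x : Fin (n + 1) → ℤ} {t : ℤ}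
    (h : ∀ j ∈ Icc 2 (n - 2), x j = t) :
    Qf n x x = x 0 ^ 2 - x 1 ^ 2 - (n - 3) * t ^ 2 - x (n - 1 : ℕ) ^ 2 - x n ^ 2 := by
  have hsq : ∀ j ∈ Icc 2 (n - 2), x j * x j = t ^ 2 := fun j hj => by rw [h j hj, sq]
  rw [Qf, sum_Icc_one_split hn, sum_Icc_two_eq_nsmul (f := fun j : ℕ => x j * x j) hsq,
    nsmul_eq_mul, Nat.cast_sub hn]
  push_cast
  ring

lemma eq_of_sphere_equations {N a b t u c : ℤ} (hN : 4 ≤ N) (hD : 3 * a + 2 * b + c = 0)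
    (h₁ : u - t = 1) (hTop : a + b + t + c = 0)
    (hc₁ : 3 * a + b + (N - 3) * t + u + c = -N)
    (hQ : a ^ 2 - b ^ 2 - (N - 3) * t ^ 2 - u ^ 2 - c ^ 2 = -(N + 2)) :
    a = -2 ∧ b = 3 ∧ t = -1 ∧ u = 0 ∧ c = 0 := by
  have ha : 2 * a = -(N - 3) * t - N - 1 := by linarith
  have hb : b = (N - 2) * t + N + 1 := by linarith
  have hquad : N * ((t + 1) * ((N - 1) * t + N + 1)) = 0 := by
    have hu : u = t + 1 := by linarith
    have hc : c = -a - b - t := by linarith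
    subst hu hc
    linear_combination (-1) * hQ - (b + t) * ha - (2 * b + (N + 1) * (t + 1)) * hb
  have ht : t = -1 := by
    rcases mul_eq_zero.mp hquad with hN0 | h
    · omega
    rcases mul_eq_zero.mp h with h | h
    · linarith
    · -- `(N - 1) * (t + 1) = -2` with `N - 1 ≥ 3` has no integer solution
      have hdvd : N - 1 ∣ 2 := ⟨-(t + 1), by linarith⟩
      have := Int.le_of_dvd two_pos hdvd
      omega
  subst ht
  refine ⟨by linarith, by linarith, rfl, by linarith, by linarith⟩

/-- Determination of the `(-n-2)`-sphere class `S₀` of a `Cₙ`-configuration: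
if `Q(S,S) = -(n+2)`, `c₁(S) = -n`, `S` is orthogonal to `D₂` and to `S₂, …, S_{n-2}`,
and meets `S₁` once, then `S = -2H + 3E₁ - E₂ - ⋯ - E_{n-2}`. -/
theorem minus_n_plus_two_class (n : ℕ) (hn : 4 ≤ n) (S : Fin (n + 1) → ℤ)
    (hSS : Qf n S S = -((n : ℤ) + 2)) (hc : c₁ n S = -(n : ℤ))
    (hSD : Qf n S (D₂ n) = 0) (hS1 : Qf n S (Sc n 1) = 1)
    (hSi : ∀ i, 2 ≤ i → i ≤ n - 2 → Qf n S (Sc n i) = 0) :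
    S = (-2 : ℤ) • Hv n + 3 • Ev n 1 - ∑ j ∈ Finset.Icc 2 (n - 2), Ev n j := by
  have hstep : ∀ k, 2 ≤ k → k < n - 2 → S (k + 1 : ℕ) = S k := fun k hk hkn => by
    have := hSi (n - 1 - k) (by omega) (by omega)
    rwa [Qf_Sc_right_of_lt (by omega), show n - (n - 1 - k) = k + 1 by omega,
      show n - 1 - (n - 1 - k) = k by omega, sub_eq_zero] at this
  have hchain : ∀ j ∈ Icc 2 (n - 2), S j = S (2 : ℕ) :=
    eq_of_forall_succ_eq (f := fun m : ℕ => S m) hstep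
  rw [Qf_D₂_right (by omega)] at hSD
  rw [Qf_Sc_right_of_lt (by omega), show n - 1 - 1 = n - 2 by omega,
    hchain (n - 2) (by simp; omega)] at hS1
  have hTop := hSi (n - 2) (by omega) le_rfl
  rw [Qf_Sc_right_last (by omega)] at hTop
  rw [c₁_eq_of_middle_const (by omega) hchain] at hc
  rw [Qf_self_eq_of_middle_const (by omega) hchain] at hSS
  obtain ⟨hS0, hE₁, hE₂, hEpred, hElast⟩ :=
    eq_of_sphere_equations (N := n) (by exact_mod_cast hn) hSD hS1 hTop hc hSS
  refine funext_natCast fun m hm => ?_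
  simp only [Pi.sub_apply, Pi.add_apply, Pi.smul_apply, Hv_eq_Ev_zero,
    Ev_natCast_apply (Nat.zero_le n) hm, Ev_natCast_apply (by omega : 1 ≤ n) hm,
    sum_Ev_natCast_apply (by omega : n - 2 ≤ n) hm]
  obtain rfl | rfl | hmid | rfl | rfl :
      m = 0 ∨ m = 1 ∨ m ∈ Icc 2 (n - 2) ∨ m = n - 1 ∨ n = m := by
    rw [mem_Icc]; omega
  · simp [hS0]
  · simp [hE₁]
  · have := mem_Icc.mp hmid
    rw [hchain m hmid, hE₂, if_neg (by omega), if_neg (by omega), if_pos hmid]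
    norm_num
  · rw [hEpred, if_neg (by omega), if_neg (by omega), if_neg (by simp; omega)]
    norm_num
  · rw [hElast, if_neg (by omega), if_neg (by omega), if_neg (by simp; omega)]
    norm_num
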